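/- Let g_sr, g_rr, g_rd, g_sd be mutually independent real random variables with g_sr ~ Gamma(m_sr, θ_sr), g_rr ~ Gamma(m_rr, θ_rr), g_rd ~ Gamma(m_rd, θ_rd), g_sd ~ Gamma(m_sd, θ_sd) (integer shapes ≥ 1, positive scales). Fix P_s, P_r > 0, 0 ≤ C < 1, r > 0, set γ = 2^{2r} − 1 and ψ = Ψ_γ(C). With A_sr = {(P_s·g_sr + P_r·g_rr + 1)² − (P_r·g_rr·C)² < 2^{2r}·((P_r·g_rr + 1)² − (P_r·g_rr·C)²)} and A_rd = {(P_r·g_rd + P_s·g_sd + 1)² − (P_r·g_rd·C)² < 2^{2r}·(P_s·g_sd + 1)²}, the end-to-end outage probability satisfies P[A_sr ∪ A_rd] ≥ 1 − ( e^{−ψ·(1/(P_s·θ_sr) + 1/(P_r·θ_rd·(1 − C²)))} / (Γ(m_sd)·Γ(m_rr)·θ_sd^{m_sd}·θ_rr^{m_rr}) ) · Σ_{m=0}^{m_sr−1} Σ_{m'=0}^{m_rd−1} Σ_{k=0}^{m} Σ_{k'=0}^{m'} binom(m,k)·binom(m',k') · ( P_r^{k − m'} · Γ(k + m_rr) ·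 Γ(k' + m_sd) · ψ^{m + m'} / ( P_s^{m − k'} · m! · m'! · θ_sr^{m} · (θ_rd·(1 − C²))^{m'} ) ) / ( ( P_r·ψ/(P_s·θ_sr) + 1/θ_rr )^{k + m_rr} · ( P_s·ψ/(P_r·θ_rd·(1 − C²)) + 1/θ_sd )^{k' + m_sd} ). -/

import Mathlib

/-!
Outside the outage event each hop's rate condition becomes a linear inequality between its
gains: since `(ψ + 1)² = 1 + γ (1 - C²)` for `ψ = Ψ_γ(C)`, the first condition forces
`ψ (1 + P_r g_rr) ≤ P_s g_sr` and the second `ψ (1 + P_s g_sd) ≤ (1 - C²) P_r g_rd`.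
These two events depend on disjoint pairs of independent gains, so the probability of no outage
is at most the product of their probabilities. Each factor has the form `P(a + b Y ≤ X)` for
independent Gamma variables of integer shape and is computed exactly by conditioning on `Y`:
the survival function of `X` is `e^(-t/θ) ∑_{j<m} (t/θ)^j / j!`, and after expanding
`(a + b Y)^j` binomially every term is a Gamma integral in `Y`.
-/

open MeasureTheory ProbabilityTheory Real Finset

/-- `Psi γ x = √(1 + γ(1 - x²)) - 1`. -/
noncomputable def Psi (γ x : ℝ) : ℝ := Real.sqrt (1 + γ * (1 - x ^ 2)) - 1

/-- The Gamma(m, θ) law (integer shape `m ≥ 1`, scale `θ > 0`), given by its density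
`x^(m-1) e^(-x/θ) / ((m-1)! θ^m)` on `[0, ∞)`. -/
noncomputable def gammaLaw (m : ℕ) (θ : ℝ) : Measure ℝ :=
  volume.withDensity fun x =>
    ENNReal.ofReal
      (if 0 ≤ x then x ^ (m - 1) * Real.exp (-x / θ) / ((Nat.factorial (m - 1) : ℝ) * θ ^ m)
       else 0)

open Filter Topology
open scoped Nat

section Psi

variable {γ C : ℝ}

lemma Psi_nonneg (hγ : 0 ≤ γ) (hC : C ^ 2 ≤ 1) : 0 ≤ Psi γ C := by
  rw [Psi, sub_nonneg, one_le_sqrt]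
  nlinarith

lemma sq_Psi_add_one (hγ : 0 ≤ γ) (hC : C ^ 2 ≤ 1) : (Psi γ C + 1) ^ 2 = 1 + γ * (1 - C ^ 2) := by
  rw [Psi, sub_add_cancel, sq_sqrt]
  nlinarith

lemma Psi_mul_one_add_le {s u : ℝ} (hγ : 0 ≤ γ) (hC : C ^ 2 ≤ 1) (hs : 0 ≤ s) (hu : 0 ≤ u)
    (h : (1 + γ) * ((u + 1) ^ 2 - (u * C) ^ 2) ≤ (s + u + 1) ^ 2 - (u * C) ^ 2) :
    Psi γ C * (1 + u) ≤ s := by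
  have hsq := sq_Psi_add_one hγ hC
  by_contra! hlt
  have : (s + u + 1) ^ 2 < ((Psi γ C + 1) * (1 + u)) ^ 2 := by
    gcongr
    linarith
  nlinarith [mul_nonneg (mul_nonneg hγ (sq_nonneg C)) (by linarith : (0:ℝ) ≤ 1 + 2 * u)]

lemma Psi_mul_one_add_le_mul {u v : ℝ} (hγ : 0 ≤ γ) (hC : C ^ 2 ≤ 1) (hu : 0 ≤ u) (hv : 0 ≤ v)
    (h : (1 + γ) * (v + 1) ^ 2 ≤ (u + v + 1) ^ 2 - (u * C) ^ 2) :
    Psi γ C * (1 + v) ≤ (1 - C ^ 2) * u := by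
  have hsq := sq_Psi_add_one hγ hC
  by_contra! hlt
  have : ((1 - C ^ 2) * u + (1 + v)) ^ 2 < ((Psi γ C + 1) * (1 + v)) ^ 2 := by
    gcongr
    nlinarith
  nlinarith [mul_le_mul_of_nonneg_left h (sub_nonneg.2 hC)]

end Psi

noncomputable def gammaDensity (m : ℕ) (θ x : ℝ) : ℝ :=
  x ^ (m - 1) * exp (-x / θ) / ((m - 1)! * θ ^ m)

noncomputable def gammaSurvival (m : ℕ) (θ t : ℝ) : ℝ :=
  exp (-(t / θ)) * ∑ j ∈ range m, (t / θ) ^ j / j !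

section GammaLaw

variable {m : ℕ} {θ : ℝ}

lemma gammaDensity_nonneg (hθ : 0 < θ) {x : ℝ} (hx : 0 ≤ x) : 0 ≤ gammaDensity m θ x := by
  unfold gammaDensity
  positivity

lemma hasDerivAt_neg_gammaSurvival (n : ℕ) (hθ : θ ≠ 0) (x : ℝ) :
    HasDerivAt (fun t => -gammaSurvival (n + 1) θ t) (gammaDensity (n + 1) θ x) x := by
  have hexp : HasDerivAt (fun t => exp (-(t / θ))) (-exp (-(x / θ)) / θ) x := by
    simpa [neg_div, div_eq_mul_inv, mul_comm] using ((hasDerivAt_id x).div_const θ).neg.exp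
  induction n with
  | zero =>
    have hsurv : (fun t => -gammaSurvival (0 + 1) θ t) = fun t => -exp (-(t / θ)) := by
      ext t
      simp [gammaSurvival]
    rw [hsurv]
    refine hexp.fun_neg.congr_deriv ?_
    simp [gammaDensity, neg_div]
  | succ n ih =>
    have hpow : HasDerivAt (fun t => (t / θ) ^ (n + 1) / (n + 1)!)
        ((n + 1 : ℕ) * (x / θ) ^ n * (1 / θ) / (n + 1)!) x := by
      simpa using (((hasDerivAt_id x).div_const θ).pow (n + 1)).div_const ((n + 1)! : ℝ)
    have hsplit : (fun t => -gammaSurvival (n + 1 + 1) θ t) =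
        fun t => -gammaSurvival (n + 1) θ t - exp (-(t / θ)) * ((t / θ) ^ (n + 1) / (n + 1)!) := by
      ext t
      rw [gammaSurvival, gammaSurvival, sum_range_succ]
      ring
    rw [hsplit]
    refine (ih.fun_sub (hexp.fun_mul hpow)).congr_deriv ?_
    simp only [gammaDensity, Nat.add_sub_cancel, Nat.factorial_succ, neg_div, div_pow]
    push_cast
    field_simp
    ring

lemma tendsto_gammaSurvival_atTop (hθ : 0 < θ) :
    Tendsto (gammaSurvival m θ) atTop (𝓝 0) := by
  have h : ∀ j : ℕ, Tendsto (fun t => (t / θ) ^ j * exp (-(t / θ))) atTop (𝓝 0) := fun j =>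
    (tendsto_pow_mul_exp_neg_atTop_nhds_zero j).comp (tendsto_id.atTop_div_const hθ)
  have hsum := tendsto_finsetSum (range m) fun j _ => (h j).div_const (j ! : ℝ)
  simp only [zero_div, sum_const_zero] at hsum
  refine hsum.congr fun t => ?_
  simp only [gammaSurvival, mul_sum]
  exact sum_congr rfl fun j _ => by ring

lemma integrableOn_Ioi_gammaDensity (n : ℕ) (hθ : 0 < θ) {t : ℝ} (ht : 0 ≤ t) :
    IntegrableOn (gammaDensity (n + 1) θ) (Set.Ioi t) := by
  simpa using integrableOn_Ioi_deriv_of_nonneg' (fun x _ => hasDerivAt_neg_gammaSurvival n hθ.ne' x)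
    (fun x hx => gammaDensity_nonneg hθ (ht.trans hx.le)) (tendsto_gammaSurvival_atTop hθ).neg

lemma integral_Ioi_gammaDensity (n : ℕ) (hθ : 0 < θ) {t : ℝ} (ht : 0 ≤ t) :
    ∫ x in Set.Ioi t, gammaDensity (n + 1) θ x = gammaSurvival (n + 1) θ t := by
  rw [integral_Ioi_of_hasDerivAt_of_nonneg' (fun x _ => hasDerivAt_neg_gammaSurvival n hθ.ne' x)
    (fun x hx => gammaDensity_nonneg hθ (ht.trans hx.le))
    (by simpa using (tendsto_gammaSurvival_atTop (m := n + 1) hθ).neg)]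
  ring

lemma gammaSurvival_zero (hm : 1 ≤ m) : gammaSurvival m θ 0 = 1 := by
  obtain ⟨n, rfl⟩ : ∃ n, m = n + 1 := ⟨m - 1, by omega⟩
  simp [gammaSurvival, sum_range_succ']

lemma pow_mul_exp_neg_mul_eq (p : ℕ) {c : ℝ} (hc : 0 < c) (x : ℝ) :
    x ^ p * exp (-(c * x)) = p ! / c ^ (p + 1) * gammaDensity (p + 1) c⁻¹ x := by
  rw [gammaDensity, Nat.add_sub_cancel, div_inv_eq_mul, inv_pow]
  field_simp

lemma integrableOn_Ioi_pow_mul_exp_neg_mul (p : ℕ) {c : ℝ} (hc : 0 < c) :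
    IntegrableOn (fun x => x ^ p * exp (-(c * x))) (Set.Ioi 0) := by
  simp only [pow_mul_exp_neg_mul_eq p hc]
  exact (integrableOn_Ioi_gammaDensity p (inv_pos.2 hc) le_rfl).const_mul _

lemma integral_Ioi_pow_mul_exp_neg_mul (p : ℕ) {c : ℝ} (hc : 0 < c) :
    ∫ x in Set.Ioi 0, x ^ p * exp (-(c * x)) = p ! / c ^ (p + 1) := by
  simp only [pow_mul_exp_neg_mul_eq p hc]
  rw [integral_const_mul, integral_Ioi_gammaDensity p (inv_pos.2 hc) le_rfl,
    gammaSurvival_zero le_add_self, mul_one]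

lemma gammaLaw_eq_withDensity : gammaLaw m θ =
    volume.withDensity fun x => ENNReal.ofReal (if 0 ≤ x then gammaDensity m θ x else 0) :=
  rfl

instance : SFinite (gammaLaw m θ) := by
  rw [gammaLaw_eq_withDensity]
  infer_instance

lemma gammaLaw_ae_nonneg : ∀ᵐ x ∂gammaLaw m θ, 0 ≤ x := by
  simp only [ae_iff, not_le]
  change gammaLaw m θ (Set.Iio 0) = 0
  rw [gammaLaw_eq_withDensity, withDensity_apply _ measurableSet_Iio]
  refine (setLIntegral_congr_fun measurableSet_Iio fun x (hx : x < 0) => ?_).trans lintegral_zero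
  simp [not_le.2 hx]

lemma gammaLaw_Ici (hm : 1 ≤ m) (hθ : 0 < θ) {c : ℝ} (hc : 0 ≤ c) :
    gammaLaw m θ (Set.Ici c) = ENNReal.ofReal (gammaSurvival m θ c) := by
  obtain ⟨n, rfl⟩ : ∃ n, m = n + 1 := ⟨m - 1, by omega⟩
  rw [gammaLaw_eq_withDensity, withDensity_apply _ measurableSet_Ici,
    ← restrict_Ioi_eq_restrict_Ici, ← integral_Ioi_gammaDensity n hθ hc,
    ofReal_integral_eq_lintegral_ofReal (integrableOn_Ioi_gammaDensity n hθ hc)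
      ((ae_restrict_iff' measurableSet_Ioi).2
        (.of_forall fun x (hx : c < x) => gammaDensity_nonneg hθ (hc.trans hx.le)))]
  refine setLIntegral_congr_fun measurableSet_Ioi fun x (hx : c < x) => ?_
  rw [if_pos (hc.trans hx.le)]

lemma lintegral_gammaLaw_ofReal (hθ : 0 < θ) {f : ℝ → ℝ} (hf : Measurable f)
    (hint : IntegrableOn (fun y => gammaDensity m θ y * f y) (Set.Ioi 0))
    (hnn : ∀ y, 0 < y → 0 ≤ f y) :
    ∫⁻ y, ENNReal.ofReal (f y) ∂gammaLaw m θ =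
      ENNReal.ofReal (∫ y in Set.Ioi 0, gammaDensity m θ y * f y) := by
  have hdens : Measurable fun y => ENNReal.ofReal (if 0 ≤ y then gammaDensity m θ y else 0) := by
    unfold gammaDensity
    exact (Measurable.ite measurableSet_Ici (by fun_prop) measurable_const).ennreal_ofReal
  have hmul : ((fun y => ENNReal.ofReal (if 0 ≤ y then gammaDensity m θ y else 0)) *
      fun y => ENNReal.ofReal (f y)) =
        (Set.Ici 0).indicator fun y => ENNReal.ofReal (gammaDensity m θ y * f y) := by
    ext y
    by_cases hy : 0 ≤ y
    · simp [hy, ENNReal.ofReal_mul (gammaDensity_nonneg hθ hy)]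
    · simp [hy]
  rw [gammaLaw_eq_withDensity, lintegral_withDensity_eq_lintegral_mul _ hdens hf.ennreal_ofReal,
    hmul, lintegral_indicator measurableSet_Ici, ← restrict_Ioi_eq_restrict_Ici,
    ofReal_integral_eq_lintegral_ofReal hint ((ae_restrict_iff' measurableSet_Ioi).2
      (.of_forall fun y (hy : 0 < y) => mul_nonneg (gammaDensity_nonneg hθ hy.le) (hnn y hy)))]

lemma gammaDensity_mul_gammaSurvival_add_mul (n m : ℕ) {θ₁ θ₂ : ℝ} (hθ₁ : θ₁ ≠ 0)
    (hθ₂ : θ₂ ≠ 0) (a b y : ℝ) :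
    gammaDensity (n + 1) θ₂ y * gammaSurvival m θ₁ (a + b * y) =
      ∑ j ∈ range m, ∑ k ∈ range (j + 1),
        exp (-(a / θ₁)) / (n ! * θ₂ ^ (n + 1)) *
          (j.choose k * a ^ (j - k) * b ^ k / (j ! * θ₁ ^ j)) *
            (y ^ (k + n) * exp (-((b / θ₁ + 1 / θ₂) * y))) := by
  have hexp : exp (-y / θ₂) * exp (-((b * y + a) / θ₁)) =
      exp (-(a / θ₁)) * exp (-((b / θ₁ + 1 / θ₂) * y)) := by
    rw [← exp_add, ← exp_add]
    congr 1
    field_simp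
    ring
  simp only [gammaDensity, gammaSurvival, Nat.add_sub_cancel, add_comm a, add_pow, div_pow,
    sum_div, mul_sum]
  refine sum_congr rfl fun j _ => sum_congr rfl fun k _ => ?_
  rw [mul_pow, pow_add]
  linear_combination (y ^ n * b ^ k * y ^ k * a ^ (j - k) * j.choose k /
    (θ₁ ^ j * j ! * n ! * θ₂ ^ (n + 1))) * hexp

end GammaLaw

/-- `P(a + b Y ≤ X)` for independent `X ~ Gamma(m₁, θ₁)` and `Y ~ Gamma(m₂, θ₂)`: the survival
function of `X` at `a + b Y`, expanded binomially and integrated term by term in `Y`. -/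
noncomputable def gammaAffineTail (m₁ m₂ : ℕ) (θ₁ θ₂ a b : ℝ) : ℝ :=
  exp (-(a / θ₁)) / (Gamma m₂ * θ₂ ^ m₂) *
    ∑ j ∈ range m₁, ∑ k ∈ range (j + 1),
      j.choose k * a ^ (j - k) * b ^ k * Gamma (k + m₂) /
        (j ! * θ₁ ^ j * (b / θ₁ + 1 / θ₂) ^ (k + m₂))

lemma gammaLaw_prod_setOf_add_mul_le {m₁ m₂ : ℕ} (hm₁ : 1 ≤ m₁) (hm₂ : 1 ≤ m₂) {θ₁ θ₂ a b : ℝ}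
    (hθ₁ : 0 < θ₁) (hθ₂ : 0 < θ₂) (ha : 0 ≤ a) (hb : 0 ≤ b) :
    (gammaLaw m₁ θ₁).prod (gammaLaw m₂ θ₂) {p | a + b * p.2 ≤ p.1} =
      ENNReal.ofReal (gammaAffineTail m₁ m₂ θ₁ θ₂ a b) := by
  obtain ⟨n, rfl⟩ : ∃ n, m₂ = n + 1 := ⟨m₂ - 1, by omega⟩
  have hβ : 0 < b / θ₁ + 1 / θ₂ := by positivity
  have hslice : ∀ᵐ y ∂gammaLaw (n + 1) θ₂,
      gammaLaw m₁ θ₁ ((fun x => (x, y)) ⁻¹' {p | a + b * p.2 ≤ p.1}) =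
        ENNReal.ofReal (gammaSurvival m₁ θ₁ (a + b * y)) := by
    filter_upwards [gammaLaw_ae_nonneg] with y hy
    exact gammaLaw_Ici (c := a + b * y) hm₁ hθ₁ (by positivity)
  have hint : ∀ p, IntegrableOn (fun y => y ^ p * exp (-((b / θ₁ + 1 / θ₂) * y))) (Set.Ioi 0) :=
    fun p => integrableOn_Ioi_pow_mul_exp_neg_mul p hβ
  have hΓ : ∀ p : ℕ, Gamma ((p + 1 : ℕ) : ℝ) = p ! := fun p => by
    rw [Nat.cast_succ, Gamma_nat_eq_factorial]
  rw [Measure.prod_apply_symm (measurableSet_le (by fun_prop) (by fun_prop)),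
    lintegral_congr_ae hslice, lintegral_gammaLaw_ofReal hθ₂ (by unfold gammaSurvival; fun_prop)
      ?_ fun y hy => by unfold gammaSurvival; positivity]
  · simp only [gammaDensity_mul_gammaSurvival_add_mul n m₁ hθ₁.ne' hθ₂.ne']
    rw [integral_finsetSum _ fun j _ => integrable_finsetSum _ fun k _ => (hint _).const_mul _,
      gammaAffineTail, mul_sum]
    refine congrArg ENNReal.ofReal (sum_congr rfl fun j _ => ?_)
    rw [integral_finsetSum _ fun k _ => (hint _).const_mul _, mul_sum]
    refine sum_congr rfl fun k _ => ?_
    rw [integral_const_mul, integral_Ioi_pow_mul_exp_neg_mul _ hβ, hΓ,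
      show (k : ℝ) + (n + 1 : ℕ) = (k + n + 1 : ℕ) by push_cast; ring, hΓ, ← add_assoc]
    field_simp
  · simp only [gammaDensity_mul_gammaSurvival_add_mul n m₁ hθ₁.ne' hθ₂.ne']
    exact integrable_finsetSum _ fun j _ => integrable_finsetSum _ fun k _ => (hint _).const_mul _

lemma gammaAffineTail_nonneg (m₁ m₂ : ℕ) {θ₁ θ₂ a b : ℝ} (hθ₁ : 0 < θ₁) (hθ₂ : 0 < θ₂)
    (ha : 0 ≤ a) (hb : 0 ≤ b) : 0 ≤ gammaAffineTail m₁ m₂ θ₁ θ₂ a b := by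
  unfold gammaAffineTail
  positivity

lemma gammaAffineTail_mul_eq {m_sr m_rr m_rd m_sd : ℕ} (hm_rr : 1 ≤ m_rr) (hm_sd : 1 ≤ m_sd)
    {θ_sr θ_rr θ_rd θ_sd P_s P_r d ψ : ℝ}
    (hθ_sr : 0 < θ_sr) (hθ_rr : 0 < θ_rr) (hθ_rd : 0 < θ_rd) (hθ_sd : 0 < θ_sd)
    (hP_s : 0 < P_s) (hP_r : 0 < P_r) (hd : 0 < d) (hψ : 0 ≤ ψ) :
    gammaAffineTail m_sr m_rr θ_sr θ_rr (ψ / P_s) (ψ * P_r / P_s) *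
        gammaAffineTail m_rd m_sd θ_rd θ_sd (ψ / (d * P_r)) (ψ * P_s / (d * P_r)) =
      exp (-(ψ * (1 / (P_s * θ_sr) + 1 / (P_r * θ_rd * d)))) /
          (Gamma (m_sd : ℝ) * Gamma (m_rr : ℝ) * θ_sd ^ m_sd * θ_rr ^ m_rr) *
        ∑ m ∈ range m_sr, ∑ m' ∈ range m_rd, ∑ k ∈ range (m + 1), ∑ k' ∈ range (m' + 1),
          (m.choose k : ℝ) * (m'.choose k' : ℝ) *
            (P_r ^ ((k : ℤ) - (m' : ℤ)) * Gamma ((k : ℝ) + m_rr) *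
                Gamma ((k' : ℝ) + m_sd) * ψ ^ (m + m') /
              (P_s ^ ((m : ℤ) - (k' : ℤ)) * (m ! : ℝ) * (m' ! : ℝ) * θ_sr ^ m * (θ_rd * d) ^ m')) /
            ((P_r * ψ / (P_s * θ_sr) + 1 / θ_rr) ^ (k + m_rr) *
              (P_s * ψ / (P_r * θ_rd * d) + 1 / θ_sd) ^ (k' + m_sd)) := by
  have hexp : exp (-(ψ / P_s / θ_sr)) * exp (-(ψ / (d * P_r) / θ_rd)) =
      exp (-(ψ * (1 / (P_s * θ_sr) + 1 / (P_r * θ_rd * d)))) := by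
    rw [← exp_add]
    congr 1
    field_simp
    ring
  have hβ₁ : ψ * P_r / P_s / θ_sr + 1 / θ_rr = P_r * ψ / (P_s * θ_sr) + 1 / θ_rr := by ring
  have hβ₂ : ψ * P_s / (d * P_r) / θ_rd + 1 / θ_sd = P_s * ψ / (P_r * θ_rd * d) + 1 / θ_sd := by
    ring
  have hβ₁0 : 0 < P_r * ψ / (P_s * θ_sr) + 1 / θ_rr := by positivity
  have hβ₂0 : 0 < P_s * ψ / (P_r * θ_rd * d) + 1 / θ_sd := by positivity
  rw [gammaAffineTail, gammaAffineTail, mul_mul_mul_comm, sum_mul_sum, ← hexp, hβ₁, hβ₂]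
  simp only [sum_mul_sum]
  simp only [mul_sum]
  refine sum_congr rfl fun m _ => sum_congr rfl fun m' _ =>
    sum_congr rfl fun k hk => sum_congr rfl fun k' hk' => ?_
  obtain ⟨i, rfl⟩ := Nat.exists_eq_add_of_le (Nat.lt_succ_iff.1 (mem_range.1 hk))
  obtain ⟨i', rfl⟩ := Nat.exists_eq_add_of_le (Nat.lt_succ_iff.1 (mem_range.1 hk'))
  simp only [Nat.add_sub_cancel_left, zpow_sub₀ hP_r.ne', zpow_sub₀ hP_s.ne', zpow_natCast, div_pow,
    mul_pow]
  have := Gamma_pos_of_pos (by positivity : (0 : ℝ) < m_rr)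
  have := Gamma_pos_of_pos (by positivity : (0 : ℝ) < m_sd)
  field_simp
  ring

section Independence

variable {Ω : Type*} [MeasurableSpace Ω] {μ : Measure Ω}

lemma ae_nonneg_of_map_eq_gammaLaw {X : Ω → ℝ} (hX : Measurable X) {m : ℕ} {θ : ℝ}
    (h : μ.map X = gammaLaw m θ) : ∀ᵐ ω ∂μ, 0 ≤ X ω :=
  ae_of_ae_map hX.aemeasurable (h ▸ gammaLaw_ae_nonneg)

lemma measure_mul_one_add_le_of_indepFun [IsFiniteMeasure μ] {X Y : Ω → ℝ} (hX : Measurable X)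
    (hY : Measurable Y) (hXY : IndepFun X Y μ) {m₁ m₂ : ℕ} (hm₁ : 1 ≤ m₁) (hm₂ : 1 ≤ m₂)
    {θ₁ θ₂ : ℝ} (hθ₁ : 0 < θ₁) (hθ₂ : 0 < θ₂) (hlawX : μ.map X = gammaLaw m₁ θ₁)
    (hlawY : μ.map Y = gammaLaw m₂ θ₂) {c q s : ℝ} (hc : 0 ≤ c) (hq : 0 ≤ q) (hs : 0 < s) :
    μ {ω | c * (1 + q * Y ω) ≤ s * X ω} =
      ENNReal.ofReal (gammaAffineTail m₁ m₂ θ₁ θ₂ (c / s) (c * q / s)) := by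
  have hset : {ω | c * (1 + q * Y ω) ≤ s * X ω} =
      (fun ω => (X ω, Y ω)) ⁻¹' {p | c / s + c * q / s * p.2 ≤ p.1} := by
    ext ω
    change c * (1 + q * Y ω) ≤ s * X ω ↔ c / s + c * q / s * Y ω ≤ X ω
    rw [← div_le_iff₀' hs, show c * (1 + q * Y ω) / s = c / s + c * q / s * Y ω by ring]
  rw [hset, ← Measure.map_apply (hX.prodMk hY) (measurableSet_le (by fun_prop) (by fun_prop)),
    (indepFun_iff_map_prod_eq_prod_map_map hX.aemeasurable hY.aemeasurable).1 hXY, hlawX, hlawY,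
    gammaLaw_prod_setOf_add_mul_le hm₁ hm₂ hθ₁ hθ₂ (by positivity) (by positivity)]

lemma one_sub_le_toReal_measure [IsProbabilityMeasure μ] {s : Set Ω} {q : ℝ} (hq : 0 ≤ q)
    (h : μ sᶜ ≤ ENNReal.ofReal q) : 1 - q ≤ (μ s).toReal := by
  have h1 : 1 ≤ μ s + ENNReal.ofReal q :=
    measure_univ (μ := μ) ▸ (measure_univ_le_add_compl s).trans (by gcongr)
  have h2 := ENNReal.toReal_mono (by finiteness) h1
  rw [ENNReal.toReal_add (measure_ne_top _ _) ENNReal.ofReal_ne_top, ENNReal.toReal_ofReal hq,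
    ENNReal.toReal_one] at h2
  linarith

end Independence

theorem stmt_8
    {Ω : Type*} [MeasurableSpace Ω] (μ : Measure Ω) [IsProbabilityMeasure μ]
    (g_sr g_rr g_rd g_sd : Ω → ℝ)
    (hg_sr : Measurable g_sr) (hg_rr : Measurable g_rr)
    (hg_rd : Measurable g_rd) (hg_sd : Measurable g_sd)
    (hindep : iIndepFun (m := fun _ : Fin 4 => Real.measurableSpace)
      ![g_sr, g_rr, g_rd, g_sd] μ)
    (m_sr m_rr m_rd m_sd : ℕ)
    (hm_sr : 1 ≤ m_sr) (hm_rr : 1 ≤ m_rr) (hm_rd : 1 ≤ m_rd) (hm_sd : 1 ≤ m_sd)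
    (θ_sr θ_rr θ_rd θ_sd : ℝ)
    (hθ_sr : 0 < θ_sr) (hθ_rr : 0 < θ_rr) (hθ_rd : 0 < θ_rd) (hθ_sd : 0 < θ_sd)
    (hlaw_sr : μ.map g_sr = gammaLaw m_sr θ_sr)
    (hlaw_rr : μ.map g_rr = gammaLaw m_rr θ_rr)
    (hlaw_rd : μ.map g_rd = gammaLaw m_rd θ_rd)
    (hlaw_sd : μ.map g_sd = gammaLaw m_sd θ_sd)
    (P_s P_r : ℝ) (hP_s : 0 < P_s) (hP_r : 0 < P_r)
    (C : ℝ) (hC : C ∈ Set.Ico (0 : ℝ) 1)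
    (r : ℝ) (hr : 0 < r)
    (γ ψ : ℝ) (hγ : γ = (2 : ℝ) ^ (2 * r) - 1) (hψ : ψ = Psi γ C) :
    (μ ({ω | (P_s * g_sr ω + P_r * g_rr ω + 1) ^ 2 - (P_r * g_rr ω * C) ^ 2
          < (2 : ℝ) ^ (2 * r) * ((P_r * g_rr ω + 1) ^ 2 - (P_r * g_rr ω * C) ^ 2)} ∪
        {ω | (P_r * g_rd ω + P_s * g_sd ω + 1) ^ 2 - (P_r * g_rd ω * C) ^ 2
          < (2 : ℝ) ^ (2 * r) * (P_s * g_sd ω + 1) ^ 2})).toReal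
      ≥ 1 - (Real.exp (-(ψ * (1 / (P_s * θ_sr) + 1 / (P_r * θ_rd * (1 - C ^ 2))))) /
            (Real.Gamma (m_sd : ℝ) * Real.Gamma (m_rr : ℝ) * θ_sd ^ m_sd * θ_rr ^ m_rr)) *
          ∑ m ∈ range m_sr, ∑ m' ∈ range m_rd, ∑ k ∈ range (m + 1), ∑ k' ∈ range (m' + 1),
            (m.choose k : ℝ) * (m'.choose k' : ℝ) *
              (P_r ^ ((k : ℤ) - (m' : ℤ)) * Real.Gamma ((k : ℝ) + m_rr) *
                  Real.Gamma ((k' : ℝ) + m_sd) * ψ ^ (m + m') /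
                (P_s ^ ((m : ℤ) - (k' : ℤ)) * (Nat.factorial m : ℝ) *
                  (Nat.factorial m' : ℝ) * θ_sr ^ m * (θ_rd * (1 - C ^ 2)) ^ m')) /
              ((P_r * ψ / (P_s * θ_sr) + 1 / θ_rr) ^ (k + m_rr) *
                (P_s * ψ / (P_r * θ_rd * (1 - C ^ 2)) + 1 / θ_sd) ^ (k' + m_sd)) := by
  obtain ⟨hC0, hC1⟩ := hC
  subst hψ
  have hC2 : C ^ 2 < 1 := by nlinarith
  have hγ0 : 0 ≤ γ := hγ ▸ sub_nonneg.2 (one_le_rpow (by norm_num) (by positivity))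
  have h2r : (2 : ℝ) ^ (2 * r) = 1 + γ := by rw [hγ]; ring
  have hψ0 := Psi_nonneg hγ0 hC2.le
  have hsr := measure_mul_one_add_le_of_indepFun hg_sr hg_rr (hindep.indepFun (i := 0) (j := 1)
    (by decide)) hm_sr hm_rr hθ_sr hθ_rr hlaw_sr hlaw_rr hψ0 hP_r.le hP_s
  have hrd := measure_mul_one_add_le_of_indepFun hg_rd hg_sd (hindep.indepFun (i := 2) (j := 3)
    (by decide)) hm_rd hm_sd hθ_rd hθ_sd hlaw_rd hlaw_sd hψ0 hP_s.le (mul_pos (sub_pos.2 hC2) hP_r)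
  have hpairs : IndepFun (fun ω => (g_sr ω, g_rr ω)) (fun ω => (g_rd ω, g_sd ω)) μ := by
    simpa using hindep.indepFun_prodMk_prodMk (fun i => by fin_cases i <;> assumption) 0 1 2 3
      (by decide) (by decide) (by decide) (by decide)
  have hinter := hpairs.measure_inter_preimage_eq_mul {p | Psi γ C * (1 + P_r * p.2) ≤ P_s * p.1}
    {p | Psi γ C * (1 + P_s * p.2) ≤ (1 - C ^ 2) * P_r * p.1}
    (measurableSet_le (by fun_prop) (by fun_prop)) (measurableSet_le (by fun_prop) (by fun_prop))
  have hnn := gammaAffineTail_nonneg m_sr m_rr hθ_sr hθ_rr (by positivity) (by positivity)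
    (a := Psi γ C / P_s) (b := Psi γ C * P_r / P_s)
  rw [ge_iff_le, ← gammaAffineTail_mul_eq hm_rr hm_sd hθ_sr hθ_rr hθ_rd hθ_sd hP_s hP_r
    (sub_pos.2 hC2) hψ0]
  refine one_sub_le_toReal_measure (mul_nonneg hnn (gammaAffineTail_nonneg _ _ hθ_rd hθ_sd
    (by positivity) (by positivity))) ?_
  rw [ENNReal.ofReal_mul hnn]
  refine (measure_mono_ae ?_).trans_eq (hinter.trans (congrArg₂ (· * ·) hsr hrd))
  filter_upwards [ae_nonneg_of_map_eq_gammaLaw hg_sr hlaw_sr,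
    ae_nonneg_of_map_eq_gammaLaw hg_rr hlaw_rr, ae_nonneg_of_map_eq_gammaLaw hg_rd hlaw_rd,
    ae_nonneg_of_map_eq_gammaLaw hg_sd hlaw_sd] with ω h_sr h_rr h_rd h_sd hω
  obtain ⟨hA, hB⟩ := not_or.1 hω
  rw [h2r] at hA hB
  exact ⟨Psi_mul_one_add_le hγ0 hC2.le (by positivity) (by positivity) (not_lt.1 hA),
    (Psi_mul_one_add_le_mul hγ0 hC2.le (by positivity) (by positivity) (not_lt.1 hB)).trans_eq
      (mul_assoc _ _ _).symm⟩
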